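/- Let $a \in \mathbb{R}^p$ have nonnegative entries, $\gamma \in (0, 1/2)$, $J = \{i : a_i > 1\}$, $K = \sum_{i \in J} \log(a_i)$, and $\mu_\gamma = |\{i : a_i^2 > (1-\gamma)^2\}|$. Then $\log \mathcal{N}(E_a, B_1^p) \leq K + \mu_\gamma \log(3/\gamma)$. -/

import Mathlib

/-- The ellipsoid with half-axis lengths `a i` (a coordinate with `a i = 0`
forces `v i = 0`). -/
def ellipsoid (p : ℕ) (a : Fin p → ℝ) : Set (Fin p → ℝ) :=
  {v | (∑ i, v i ^ 2 / a i ^ 2) ≤ 1 ∧ ∀ i, a i = 0 → v i = 0}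

/-- `𝒩(K, L)`: the smallest `n` such that `K` can be covered by `n` translates
of `L` centered at points of `K`. -/
noncomputable def coverNum {p : ℕ} (K L : Set (Fin p → ℝ)) : ℕ :=
  sInf {n | ∃ v : Fin n → (Fin p → ℝ),
    (∀ i, v i ∈ K) ∧ K ⊆ ⋃ i, (fun w => v i + w) '' L}

/-!
Only the coordinates in `S = {i | (1 - γ)² < a i²}` have to be covered: the coordinates of a
point of `E_a` outside `S` form a vector of length at most `1 - γ`, so a `γ`-net of the
projection of `E_a` onto `ℝ^S`, extended by zero, is a `1`-net of `E_a` since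
`γ² + (1 - γ)² ≤ 1`. The projection is an ellipsoid `E` containing the ball of radius `1 - γ`.
A maximal `γ`-separated subset of `E` is a `γ`-net, and the balls of radius `γ / 2` around its
points are disjoint and lie in the dilate `(1 + γ / (2 (1 - γ))) • E`; comparing volumes bounds
the size of the net by `∏_{i ∈ S} (2 / γ + 1 / (1 - γ)) a i ≤ ∏_{i ∈ S} (3 / γ) max (a i) 1`.
-/

open Metric Set MeasureTheory
open scoped ENNReal NNReal Pointwise

lemma Metric.packingNumber_le_of_forall_finset {X : Type*} [PseudoEMetricSpace X] {ε : ℝ≥0}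
    {A : Set X} {N : ℕ}
    (h : ∀ F : Finset X, ↑F ⊆ A → IsSeparated ε (F : Set X) → F.card ≤ N) :
    packingNumber ε A ≤ N := by
  simp only [packingNumber, iSup_le_iff]
  intro C hCA hC
  by_contra! hlt
  obtain ⟨D, hDC, hD⟩ := exists_subset_encard_eq (Order.add_one_le_of_lt hlt)
  have hDfin : D.Finite := finite_of_encard_eq_coe hD
  have hcard := h hDfin.toFinset (by simpa using hDC.trans hCA)
    (by rw [hDfin.coe_toFinset]; exact hC.subset hDC)
  rw [← Nat.cast_le (α := ℕ∞), ← encard_coe_eq_coe_finsetCard, hDfin.coe_toFinset, hD] at hcard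
  norm_cast at hcard
  omega

section Packing

variable {E : Type*} [NormedAddCommGroup E] [NormedSpace ℝ E]

lemma Convex.closedBall_subset_one_add_div_smul {K : Set E} (hK : Convex ℝ K) {s r : ℝ}
    (hs : 0 < s) (hr : 0 ≤ r) (hball : closedBall 0 s ⊆ K) {c : E} (hc : c ∈ K) :
    closedBall c r ⊆ (1 + r / s) • K := by
  have hrs : 0 ≤ r / s := by positivity
  calc closedBall c r = {c} + (r / s) • closedBall 0 s := by
        rw [smul_closedBall _ _ hs.le, smul_zero, Real.norm_of_nonneg hrs,
          div_mul_cancel₀ _ hs.ne', singleton_add_closedBall_zero]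
    _ ⊆ (1 : ℝ) • K + (r / s) • K := by
        rw [one_smul]
        exact add_subset_add (singleton_subset_iff.2 hc) (smul_set_mono hball)
    _ = (1 + r / s) • K := (hK.add_smul zero_le_one hrs).symm

variable [MeasurableSpace E] [BorelSpace E] (μ : Measure E) [μ.IsAddHaarMeasure]

lemma Finset.card_mul_measure_closedBall_le_of_isSeparated {K : Set E} (hK : Convex ℝ K)
    {s : ℝ} (hs : 0 < s) (hball : closedBall 0 s ⊆ K) {ε : ℝ≥0} {F : Finset E}
    (hFK : ↑F ⊆ K) (hF : IsSeparated ε (F : Set E)) :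
    F.card * μ (closedBall 0 (ε / 2)) ≤ μ ((1 + ε / 2 / s) • K) := by
  have hdisj : (F : Set E).PairwiseDisjoint (fun c => closedBall c (ε / 2)) := by
    intro c hc d hd hcd
    apply closedBall_disjoint_closedBall
    have h : (ε : ℝ≥0∞) < edist c d := hF hc hd hcd
    rw [edist_nndist, ENNReal.coe_lt_coe, ← NNReal.coe_lt_coe, coe_nndist] at h
    linarith
  calc F.card * μ (closedBall 0 (ε / 2))
      = ∑ c ∈ F, μ (closedBall c (ε / 2)) := by simp [μ.addHaar_closedBall_center]
    _ = μ (⋃ c ∈ F, closedBall c (ε / 2)) :=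
        (measure_biUnion_finset hdisj fun c _ => measurableSet_closedBall).symm
    _ ≤ μ ((1 + ε / 2 / s) • K) := measure_mono <| iUnion₂_subset fun c hc =>
        hK.closedBall_subset_one_add_div_smul hs (by positivity) hball (hFK hc)

end Packing

section Ellipsoid

variable {ι : Type*} [Fintype ι]

def euclideanEllipsoid (b : ι → ℝ) : Set (EuclideanSpace ℝ ι) :=
  {w | ∑ i, w i ^ 2 / b i ^ 2 ≤ 1}

variable {b : ι → ℝ}

lemma closedBall_subset_euclideanEllipsoid {s : ℝ} (hs : 0 < s) (hb : ∀ i, s ≤ b i) :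
    closedBall 0 s ⊆ euclideanEllipsoid b := by
  intro w hw
  rw [EuclideanSpace.closedBall_zero_eq _ hs.le, mem_ofPred_eq] at hw
  calc ∑ i, w i ^ 2 / b i ^ 2 ≤ ∑ i, w i ^ 2 / s ^ 2 := by
        gcongr with i
        exact hb i
    _ = (∑ i, w i ^ 2) / s ^ 2 := (Finset.sum_div ..).symm
    _ ≤ 1 := div_le_one_of_le₀ hw (by positivity)

variable [DecidableEq ι]

lemma euclideanEllipsoid_eq_image_closedBall (hb : ∀ i, b i ≠ 0) :
    euclideanEllipsoid b = Matrix.toLpLin 2 2 (Matrix.diagonal b) '' closedBall 0 1 := by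
  ext w
  simp only [euclideanEllipsoid, EuclideanSpace.closedBall_zero_eq _ zero_le_one, mem_ofPred_eq,
    mem_image, one_pow]
  constructor
  · intro hw
    refine ⟨WithLp.toLp 2 (fun i => w i / b i), by simpa [div_pow] using hw, ?_⟩
    ext i
    simp [Matrix.toLpLin_apply, Matrix.mulVec_diagonal, mul_div_cancel₀ _ (hb i)]
  · rintro ⟨u, hu, rfl⟩
    simpa [Matrix.toLpLin_apply, Matrix.mulVec_diagonal, mul_pow,
      mul_div_cancel_left₀ _ (pow_ne_zero 2 (hb _))] using hu

lemma convex_euclideanEllipsoid (hb : ∀ i, b i ≠ 0) : Convex ℝ (euclideanEllipsoid b) := by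
  rw [euclideanEllipsoid_eq_image_closedBall hb]
  exact (convex_closedBall _ _).linear_image _

lemma volume_euclideanEllipsoid (hb : ∀ i, 0 < b i) :
    volume (euclideanEllipsoid b)
      = ENNReal.ofReal (∏ i, b i) * volume (closedBall (0 : EuclideanSpace ℝ ι) 1) := by
  rw [euclideanEllipsoid_eq_image_closedBall fun i => (hb i).ne', Measure.addHaar_image_linearMap,
    Matrix.toLpLin_eq_toLin, LinearMap.det_toLin, Matrix.det_diagonal,
    abs_of_pos (Finset.prod_pos fun i _ => hb i)]

lemma Finset.card_le_prod_of_isSeparated_of_subset_euclideanEllipsoid {s : ℝ} (hs : 0 < s)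
    (hb : ∀ i, s ≤ b i) {ε : ℝ≥0} (hε : 0 < ε) {F : Finset (EuclideanSpace ℝ ι)}
    (hFK : ↑F ⊆ euclideanEllipsoid b) (hF : IsSeparated ε (F : Set (EuclideanSpace ℝ ι))) :
    (F.card : ℝ) ≤ ∏ i, (2 / ε + 1 / s) * b i := by
  have hbpos : ∀ i, 0 < b i := fun i => hs.trans_le (hb i)
  have hε' : (0 : ℝ) < ε := hε
  have hprod_pos : 0 < ∏ i, b i := Finset.prod_pos fun i _ => hbpos i
  have hpack := F.card_mul_measure_closedBall_le_of_isSeparated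
    (volume : Measure (EuclideanSpace ℝ ι)) (convex_euclideanEllipsoid fun i => (hbpos i).ne') hs
    (closedBall_subset_euclideanEllipsoid hs hb) hFK hF
  rw [Measure.addHaar_closedBall' _ _ (by positivity),
    Measure.addHaar_smul_of_nonneg _ (by positivity), volume_euclideanEllipsoid hbpos,
    finrank_euclideanSpace, ← mul_assoc, ← mul_assoc, ← ENNReal.ofReal_natCast,
    ← ENNReal.ofReal_mul (by positivity), ← ENNReal.ofReal_mul (by positivity),
    ENNReal.mul_le_mul_iff_left (measure_closedBall_pos _ _ one_pos).ne'
      measure_closedBall_lt_top.ne,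
    ENNReal.ofReal_le_ofReal_iff (by positivity)] at hpack
  have hprod : ∏ i, (2 / ε + 1 / s) * b i
      = (1 + ε / 2 / s) ^ Fintype.card ι * (∏ i, b i) / (ε / 2) ^ Fintype.card ι := by
    have hfactor : 2 / (ε : ℝ) + 1 / s = (1 + ε / 2 / s) / (ε / 2) := by field_simp
    rw [Finset.prod_mul_distrib, Finset.prod_const, Finset.card_univ, hfactor, div_pow]
    ring
  rw [hprod, le_div_iff₀ (pow_pos (half_pos hε') _)]
  exact hpack

lemma exists_finset_isCover_euclideanEllipsoid {s : ℝ} (hs : 0 < s) (hb : ∀ i, s ≤ b i)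
    {ε : ℝ≥0} (hε : 0 < ε) :
    ∃ C : Finset (EuclideanSpace ℝ ι), ↑C ⊆ euclideanEllipsoid b ∧
      IsCover ε (euclideanEllipsoid b) C ∧ (C.card : ℝ) ≤ ∏ i, (2 / ε + 1 / s) * b i := by
  have hprod_nonneg : 0 ≤ ∏ i, (2 / ε + 1 / s) * b i :=
    Finset.prod_nonneg fun i _ => by have := hs.trans_le (hb i); positivity
  have hpack : packingNumber ε (euclideanEllipsoid b) ≤ ⌊∏ i, (2 / ε + 1 / s) * b i⌋₊ :=
    packingNumber_le_of_forall_finset fun F hFK hF => Nat.le_floor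
      (F.card_le_prod_of_isSeparated_of_subset_euclideanEllipsoid hs hb hε hFK hF)
  have hcov := (coveringNumber_le_packingNumber ε _).trans hpack
  obtain ⟨C, hCK, hCfin, hC, hCcard⟩ :=
    exists_set_encard_eq_coveringNumber (hcov.trans_lt (by simp)).ne
  refine ⟨hCfin.toFinset, by simpa using hCK, by simpa using hC, ?_⟩
  rw [← hCcard, hCfin.encard_eq_coe_toFinset_card, Nat.cast_le] at hcov
  exact (Nat.cast_le.2 hcov).trans (Nat.floor_le hprod_nonneg)

end Ellipsoid

lemma coverNum_le_card {p : ℕ} {K L : Set (Fin p → ℝ)} (C : Finset (Fin p → ℝ))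
    (hCK : ↑C ⊆ K) (hC : ∀ x ∈ K, ∃ c ∈ C, x - c ∈ L) : coverNum K L ≤ C.card := by
  refine Nat.sInf_le ⟨fun j => C.equivFin.symm j, fun j => hCK (C.equivFin.symm j).2, ?_⟩
  intro x hx
  obtain ⟨c, hcC, hxc⟩ := hC x hx
  exact mem_iUnion.2 ⟨C.equivFin ⟨c, hcC⟩, x - c, hxc, by simp⟩

section ExtendByZero

variable {ι : Type*} [DecidableEq ι] (S : Finset ι)

def extendByZero (c : EuclideanSpace ℝ S) (i : ι) : ℝ :=
  if h : i ∈ S then c ⟨i, h⟩ else 0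

@[simp] lemma extendByZero_coe (c : EuclideanSpace ℝ S) (i : S) : extendByZero S c i = c i :=
  dif_pos i.2

lemma extendByZero_of_notMem (c : EuclideanSpace ℝ S) {i : ι} (hi : i ∉ S) :
    extendByZero S c i = 0 :=
  dif_neg hi

end ExtendByZero

section Coordinates

variable {p : ℕ} {a : Fin p → ℝ} {x : Fin p → ℝ}

lemma sq_eq_sq_mul_div_of_mem_ellipsoid (hx : x ∈ ellipsoid p a) (i : Fin p) :
    x i ^ 2 = a i ^ 2 * (x i ^ 2 / a i ^ 2) := by
  rcases eq_or_ne (a i) 0 with h | h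
  · simp [hx.2 i h]
  · field_simp

lemma toLp_restrict_mem_euclideanEllipsoid (S : Finset (Fin p)) (hx : x ∈ ellipsoid p a) :
    WithLp.toLp 2 (fun i : S => x i) ∈ euclideanEllipsoid (fun i : S => a i) :=
  calc ∑ i : S, x i ^ 2 / a i ^ 2 = ∑ i ∈ S, x i ^ 2 / a i ^ 2 :=
      S.sum_coe_sort fun i => x i ^ 2 / a i ^ 2
    _ ≤ ∑ i, x i ^ 2 / a i ^ 2 := Finset.sum_le_univ_sum_of_nonneg fun i => by positivity
    _ ≤ 1 := hx.1

lemma extendByZero_mem_ellipsoid {S : Finset (Fin p)} (ha : ∀ i ∈ S, a i ≠ 0)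
    {c : EuclideanSpace ℝ S} (hc : c ∈ euclideanEllipsoid (fun i : S => a i)) :
    extendByZero S c ∈ ellipsoid p a := by
  refine ⟨?_, fun i hi => extendByZero_of_notMem S c fun hiS => ha i hiS hi⟩
  calc ∑ i, extendByZero S c i ^ 2 / a i ^ 2
      = ∑ i ∈ S, extendByZero S c i ^ 2 / a i ^ 2 :=
        (Finset.sum_subset (Finset.subset_univ S) fun i _ hi => by
          simp [extendByZero_of_notMem S c hi]).symm
    _ = ∑ i : S, c i ^ 2 / a i ^ 2 := by rw [← S.sum_coe_sort]; simp
    _ ≤ 1 := hc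

lemma sum_sq_sub_extendByZero_le {S : Finset (Fin p)} {r : ℝ} (hS : ∀ i ∉ S, a i ^ 2 ≤ r ^ 2)
    (hx : x ∈ ellipsoid p a) (c : EuclideanSpace ℝ S) :
    ∑ i, (x i - extendByZero S c i) ^ 2
      ≤ dist (WithLp.toLp 2 (fun i : S => x i)) c ^ 2 + r ^ 2 := by
  have hin : ∑ i ∈ S, (x i - extendByZero S c i) ^ 2
      = dist (WithLp.toLp 2 (fun i : S => x i)) c ^ 2 := by
    rw [EuclideanSpace.dist_sq_eq, ← S.sum_coe_sort]
    simp [Real.dist_eq, sq_abs]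
  have hout : ∑ i ∈ Sᶜ, (x i - extendByZero S c i) ^ 2 ≤ r ^ 2 :=
    calc ∑ i ∈ Sᶜ, (x i - extendByZero S c i) ^ 2
        = ∑ i ∈ Sᶜ, a i ^ 2 * (x i ^ 2 / a i ^ 2) := Finset.sum_congr rfl fun i hi => by
          rw [extendByZero_of_notMem S c (Finset.mem_compl.1 hi), sub_zero]
          exact sq_eq_sq_mul_div_of_mem_ellipsoid hx i
      _ ≤ ∑ i ∈ Sᶜ, r ^ 2 * (x i ^ 2 / a i ^ 2) := Finset.sum_le_sum fun i hi =>
          mul_le_mul_of_nonneg_right (hS i (Finset.mem_compl.1 hi)) (by positivity)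
      _ ≤ r ^ 2 * ∑ i, x i ^ 2 / a i ^ 2 := by
          rw [← Finset.mul_sum]
          exact mul_le_mul_of_nonneg_left
            (Finset.sum_le_univ_sum_of_nonneg fun i => by positivity) (sq_nonneg r)
      _ ≤ r ^ 2 := mul_le_of_le_one_right (sq_nonneg r) hx.1
  rw [← Finset.sum_add_sum_compl S, hin]
  exact add_le_add_right hout _

lemma coverNum_ellipsoid_le_card {S : Finset (Fin p)} {ε : ℝ≥0} {r : ℝ}
    (haS : ∀ i ∈ S, a i ≠ 0) (haSc : ∀ i ∉ S, a i ^ 2 ≤ r ^ 2)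
    {C : Finset (EuclideanSpace ℝ S)} (hCK : ↑C ⊆ euclideanEllipsoid (fun i : S => a i))
    (hC : IsCover ε (euclideanEllipsoid (fun i : S => a i)) C)
    (hεr : (ε : ℝ) ^ 2 + r ^ 2 ≤ 1) :
    coverNum (ellipsoid p a) {v | ∑ i, v i ^ 2 ≤ 1} ≤ C.card := by
  refine (coverNum_le_card (C.image (extendByZero S)) ?_ fun x hx => ?_).trans
    Finset.card_image_le
  · rw [Finset.coe_image, image_subset_iff]
    exact fun c hc => extendByZero_mem_ellipsoid haS (hCK hc)
  · obtain ⟨c, hcC, hxc⟩ := mem_iUnion₂.1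
      (isCover_iff_subset_iUnion_closedBall.1 hC (toLp_restrict_mem_euclideanEllipsoid S hx))
    refine ⟨extendByZero S c, Finset.mem_image_of_mem _ hcC, ?_⟩
    calc ∑ i, (x - extendByZero S c) i ^ 2
        ≤ dist (WithLp.toLp 2 fun i : S => x i) c ^ 2 + r ^ 2 :=
          sum_sq_sub_extendByZero_le haSc hx c
      _ ≤ ε ^ 2 + r ^ 2 := by gcongr; exact mem_closedBall.1 hxc
      _ ≤ 1 := hεr

end Coordinates

lemma log_natCast_le_log {n : ℕ} {x : ℝ} (hx : 1 ≤ x) (hn : n ≤ x) :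
    Real.log n ≤ Real.log x := by
  rcases n.eq_zero_or_pos with rfl | hpos
  · simpa using Real.log_nonneg hx
  · exact Real.log_le_log (by exact_mod_cast hpos) hn

lemma prod_mul_le_prod_three_div_mul_max {ι : Type*} (S : Finset ι) {γ : ℝ} (hγ0 : 0 < γ)
    (hγ2 : γ ≤ 1 / 2) {a : ι → ℝ} (ha : ∀ i ∈ S, 0 ≤ a i) :
    ∏ i ∈ S, (2 / γ + 1 / (1 - γ)) * a i ≤ ∏ i ∈ S, 3 / γ * max (a i) 1 := by
  have hc : 2 / γ + 1 / (1 - γ) ≤ 3 / γ := by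
    rw [show 3 / γ = 2 / γ + 1 / γ by ring]
    gcongr
    linarith
  have hc0 : 0 ≤ 2 / γ + 1 / (1 - γ) := by
    have : 0 < 1 - γ := by linarith
    positivity
  exact Finset.prod_le_prod (fun i hi => mul_nonneg hc0 (ha i hi))
    fun i hi => mul_le_mul hc (le_max_left _ _) (ha i hi) (by positivity)

lemma log_prod_mul_max {ι : Type*} (S : Finset ι) {c : ℝ} (hc : 0 < c) (a : ι → ℝ) :
    Real.log (∏ i ∈ S, c * max (a i) 1)
      = ∑ i ∈ S.filter (fun i => 1 < a i), Real.log (a i) + S.card * Real.log c := by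
  have hmax : ∀ i, Real.log (max (a i) 1) = if 1 < a i then Real.log (a i) else 0 := fun i => by
    split_ifs with h
    · rw [max_eq_left h.le]
    · rw [max_eq_right (not_lt.1 h), Real.log_one]
  rw [Real.log_prod fun i _ => by positivity, Finset.sum_filter]
  simp only [Real.log_mul hc.ne' (by positivity : max (a _) 1 ≠ 0), Finset.sum_add_distrib, hmax,
    Finset.sum_const, nsmul_eq_mul]
  ring

lemma log_natCast_le_of_le_prod_mul {ι : Type*} (S : Finset ι) {γ : ℝ} (hγ0 : 0 < γ)
    (hγ2 : γ ≤ 1 / 2) {a : ι → ℝ} (ha : ∀ i ∈ S, 0 ≤ a i) {n : ℕ}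
    (hn : (n : ℝ) ≤ ∏ i ∈ S, (2 / γ + 1 / (1 - γ)) * a i) :
    Real.log n ≤ ∑ i ∈ S.filter (fun i => 1 < a i), Real.log (a i) + S.card * Real.log (3 / γ) := by
  have h3γ : 1 ≤ 3 / γ := by rw [le_div_iff₀ hγ0]; linarith
  rw [← log_prod_mul_max S (by positivity)]
  exact log_natCast_le_log
    (Finset.one_le_prod fun i _ => one_le_mul_of_one_le_of_one_le h3γ (le_max_right _ _))
    (hn.trans (prod_mul_le_prod_three_div_mul_max S hγ0 hγ2 ha))

/-- Upper bound for ellipsoid covering numbers: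
`log 𝒩(E_a, B₁) ≤ ∑_{i ∈ J} log a_i + μ_γ log(3/γ)` where `J = {i : a_i > 1}`
and `μ_γ = |{i : a_i² > (1-γ)²}|`. -/
theorem stmt4 (p : ℕ) (a : Fin p → ℝ) (ha : ∀ i, 0 ≤ a i)
    (γ : ℝ) (hγ0 : 0 < γ) (hγ2 : γ < 1 / 2) :
    Real.log (coverNum (ellipsoid p a) {v : Fin p → ℝ | ∑ i, v i ^ 2 ≤ 1})
      ≤ (∑ i ∈ Finset.univ.filter (fun i => 1 < a i), Real.log (a i))
        + ((Finset.univ.filter (fun i => (1 - γ) ^ 2 < (a i) ^ 2)).card : ℝ)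
          * Real.log (3 / γ) := by
  set S := Finset.univ.filter fun i => (1 - γ) ^ 2 < a i ^ 2
  have hγ1 : 0 < 1 - γ := by linarith
  have haS : ∀ i : S, 1 - γ ≤ a i := fun i =>
    (lt_of_pow_lt_pow_left₀ 2 (ha i) (Finset.mem_filter.1 i.2).2).le
  obtain ⟨C, hCK, hC, hCcard⟩ :=
    exists_finset_isCover_euclideanEllipsoid (ε := ⟨γ, hγ0.le⟩) hγ1 haS hγ0
  have hcover : coverNum (ellipsoid p a) {v | ∑ i, v i ^ 2 ≤ 1} ≤ C.card :=
    coverNum_ellipsoid_le_card (fun i hi => (hγ1.trans_le (haS ⟨i, hi⟩)).ne')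
      (fun i hi => by simpa [S] using hi) hCK hC (show γ ^ 2 + (1 - γ) ^ 2 ≤ 1 by nlinarith)
  have hfilter : S.filter (fun i => 1 < a i) = Finset.univ.filter (fun i => 1 < a i) := by
    ext i
    simp only [Finset.mem_filter, Finset.mem_univ, true_and, S, and_iff_right_iff_imp]
    intro h
    nlinarith
  rw [← hfilter]
  exact log_natCast_le_of_le_prod_mul S hγ0 hγ2.le (fun i _ => ha i)
    ((Nat.cast_le.2 hcover).trans
      (hCcard.trans_eq (S.prod_coe_sort fun i => (2 / γ + 1 / (1 - γ)) * a i)))
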